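/- arXiv:1601.02202 — 3 statements merged into one kernel-verified Lean document; each statement's English description precedes it below -/
import Mathlib

section
/- For any irrational number x ∈ [0,1) and any n ≥ 1, |log q_n(x) + (log x + log Tx + ⋯ + log T^{n−1}x)| ≤ log 2, where T is the Gauss map and q_n(x) is the denominator of the n-th continued fraction convergent of x. -/
open MeasureTheory Filter Set

/-- The β-transformation `T_β x = βx - ⌊βx⌋` on `[0,1)`. -/
noncomputable def betaT (β : ℝ) (x : ℝ) : ℝ := β * x - ⌊β * x⌋

/-- The `i`-th digit (for `i ≥ 1`) of the β-expansion of `x`. -/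
noncomputable def betaEps (β : ℝ) (i : ℕ) (x : ℝ) : ℤ := ⌊β * (betaT β)^[i - 1] x⌋

/-- The cylinder of order `n` of the β-expansion containing `x`. -/
def betaCyl (β : ℝ) (n : ℕ) (x : ℝ) : Set ℝ :=
  {y ∈ Set.Ico (0:ℝ) 1 | ∀ i, 1 ≤ i → i ≤ n → betaEps β i y = betaEps β i x}

/-- The Gauss map, with `T 0 = 0`. -/
noncomputable def gaussMap (x : ℝ) : ℝ := if x = 0 then 0 else 1 / x - ⌊1 / x⌋

/-- The `i`-th partial quotient (for `i ≥ 1`) of the continued fraction expansion of `x`. -/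
noncomputable def cfA (i : ℕ) (x : ℝ) : ℤ := ⌊1 / (gaussMap^[i - 1] x)⌋

/-- The cylinder of order `m` of the continued fraction expansion containing `x`. -/
def cfCyl (m : ℕ) (x : ℝ) : Set ℝ :=
  {y ∈ Set.Ico (0:ℝ) 1 | ∀ i, 1 ≤ i → i ≤ m → cfA i y = cfA i x}

/-- `k_n(x)`: the exact number of partial quotients of the continued fraction of `x`
determined by the first `n` β-expansion digits of `x`. -/
noncomputable def kCF (β : ℝ) (n : ℕ) (x : ℝ) : ℕ :=
  sSup {m | betaCyl β n x ⊆ cfCyl m x}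

/-- Denominators `q_n(x)` of the continued fraction convergents of `x`
(`q_0 = 1`, `q_1 = a_1`, `q_n = a_n q_{n-1} + q_{n-2}`). -/
noncomputable def cfQ (x : ℝ) : ℕ → ℤ
  | 0 => 1
  | 1 => cfA 1 x
  | (n + 2) => cfA (n + 2) x * cfQ x (n + 1) + cfQ x n

/-- Numerators `p_n(x)` of the continued fraction convergents of `x`
(`p_0 = 0`, `p_1 = 1`, `p_n = a_n p_{n-1} + p_{n-2}`). -/
noncomputable def cfP (x : ℝ) : ℕ → ℤ
  | 0 => 0
  | 1 => 1
  | (n + 2) => cfA (n + 2) x * cfP x (n + 1) + cfP x n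

/-- `l_n(x)`: the length of the longest string of zeros just after the `n`-th digit
of the β-expansion of `x`. -/
noncomputable def lZero (β : ℝ) (n : ℕ) (x : ℝ) : ℕ :=
  sSup {k | ∀ j, 1 ≤ j → j ≤ k → betaEps β (n + j) x = 0}


/-! With `t_k = T^k x` and `P_n = t_0 ⋯ t_{n-1}`, the recursion `a_{k+1} + t_{k+1} = 1 / t_k`
turns `q_{n+1} = a_{n+1} q_n + q_{n-1}` into the exact identity `P_n (q_n + q_{n-1} t_n) = 1`.
Since `0 ≤ q_{n-1} t_n ≤ q_n`, this pins `q_n P_n` between `1/2` and `1`, and the sum of the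
logarithms of the `t_k` is `log P_n`. -/

lemma gaussMap_of_ne_zero {x : ℝ} (hx : x ≠ 0) : gaussMap x = Int.fract x⁻¹ := by
  rw [gaussMap, if_neg hx, one_div, Int.fract]

lemma irrational_gaussMap {x : ℝ} (h : Irrational x) : Irrational (gaussMap x) := by
  rw [gaussMap_of_ne_zero h.ne_zero, Int.fract]
  exact h.inv.sub_intCast _

lemma gaussMap_mem_Ioo_of_irrational {x : ℝ} (h : Irrational x) : gaussMap x ∈ Ioo 0 1 := by
  have h0 := (irrational_gaussMap h).ne_zero
  rw [gaussMap_of_ne_zero h.ne_zero] at h0 ⊢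
  exact ⟨(Int.fract_nonneg _).lt_of_ne' h0, Int.fract_lt_one _⟩

lemma irrational_iterate_gaussMap {x : ℝ} (h : Irrational x) (k : ℕ) :
    Irrational (gaussMap^[k] x) := by
  induction k with
  | zero => exact h
  | succ k ih => rw [Function.iterate_succ_apply']; exact irrational_gaussMap ih

lemma iterate_gaussMap_mem_Ioo {x : ℝ} (hx : x ∈ Ioo 0 1) (hirr : Irrational x) (k : ℕ) :
    gaussMap^[k] x ∈ Ioo 0 1 := by
  cases k with
  | zero => exact hx
  | succ k =>
    rw [Function.iterate_succ_apply']
    exact gaussMap_mem_Ioo_of_irrational (irrational_iterate_gaussMap hirr k)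

lemma cfA_succ_add_iterate_gaussMap {x : ℝ} {k : ℕ} (h : gaussMap^[k] x ≠ 0) :
    (cfA (k + 1) x : ℝ) + gaussMap^[k + 1] x = (gaussMap^[k] x)⁻¹ := by
  rw [Function.iterate_succ_apply', gaussMap_of_ne_zero h, cfA, Nat.add_sub_cancel, one_div,
    Int.floor_add_fract]

lemma one_le_cfA_succ {x : ℝ} {k : ℕ} (h : gaussMap^[k] x ∈ Ioc 0 1) :
    1 ≤ cfA (k + 1) x := by
  rw [cfA, Nat.add_sub_cancel, Int.le_floor, Int.cast_one, le_div_iff₀ h.1, one_mul]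
  exact h.2

lemma one_le_cfA_succ_of_irrational {x : ℝ} (hx : x ∈ Ioo 0 1) (hirr : Irrational x) (k : ℕ) :
    1 ≤ cfA (k + 1) x :=
  one_le_cfA_succ (Ioo_subset_Ioc_self (iterate_gaussMap_mem_Ioo hx hirr k))

section PartialQuotientsPos

variable {x : ℝ} (ha : ∀ k, 1 ≤ cfA (k + 1) x)
include ha

lemma cfQ_nonneg_and_le_succ (n : ℕ) : 0 ≤ cfQ x n ∧ cfQ x n ≤ cfQ x (n + 1) := by
  induction n with
  | zero => exact ⟨zero_le_one, ha 0⟩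
  | succ n ih =>
    refine ⟨ih.1.trans ih.2, ?_⟩
    show cfQ x (n + 1) ≤ cfA (n + 2) x * cfQ x (n + 1) + cfQ x n
    nlinarith [ha (n + 1)]

lemma monotone_cfQ : Monotone (cfQ x) :=
  monotone_nat_of_le_succ fun n => (cfQ_nonneg_and_le_succ ha n).2

lemma one_le_cfQ (n : ℕ) : 1 ≤ cfQ x n :=
  monotone_cfQ ha n.zero_le

end PartialQuotientsPos

lemma prod_iterate_gaussMap_mul_cfQ_add {x : ℝ} (h : ∀ k, gaussMap^[k] x ≠ 0) (n : ℕ) :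
    (∏ i ∈ Finset.range (n + 1), gaussMap^[i] x) *
      (cfQ x (n + 1) + cfQ x n * gaussMap^[n + 1] x) = 1 := by
  induction n with
  | zero =>
    rw [Finset.prod_range_one, cfQ, cfQ, Int.cast_one, one_mul,
      cfA_succ_add_iterate_gaussMap (h 0)]
    exact mul_inv_cancel₀ (h 0)
  | succ n ih =>
    have hq : (cfQ x (n + 2) : ℝ) + cfQ x (n + 1) * gaussMap^[n + 2] x
        = (cfQ x (n + 1) + cfQ x n * gaussMap^[n + 1] x) / gaussMap^[n + 1] x := by
      have hA := eq_sub_of_add_eq (cfA_succ_add_iterate_gaussMap (h (n + 1)))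
      rw [cfQ, Int.cast_add, Int.cast_mul, hA, eq_div_iff (h (n + 1))]
      linear_combination (cfQ x (n + 1) : ℝ) * inv_mul_cancel₀ (h (n + 1))
    rw [Finset.prod_range_succ, hq, mul_assoc, mul_div_cancel₀ _ (h (n + 1)), ih]

lemma cfQ_mul_prod_iterate_gaussMap_mem_Icc {x : ℝ} (hx : x ∈ Ioo 0 1) (hirr : Irrational x)
    (n : ℕ) : cfQ x n * ∏ i ∈ Finset.range n, gaussMap^[i] x ∈ Icc (1 / 2) 1 := by
  have ht := iterate_gaussMap_mem_Ioo hx hirr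
  cases n with
  | zero => norm_num [cfQ]
  | succ n =>
    have hid := prod_iterate_gaussMap_mul_cfQ_add (fun k => (ht k).1.ne') n
    have hP : 0 < ∏ i ∈ Finset.range (n + 1), gaussMap^[i] x :=
      Finset.prod_pos fun i _ => (ht i).1
    obtain ⟨hq, hqq⟩ : (0 : ℝ) ≤ cfQ x n ∧ (cfQ x n : ℝ) ≤ cfQ x (n + 1) := by
      exact_mod_cast cfQ_nonneg_and_le_succ (one_le_cfA_succ_of_irrational hx hirr) n
    have hqt : 0 ≤ (cfQ x n : ℝ) * gaussMap^[n + 1] x := mul_nonneg hq (ht (n + 1)).1.le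
    have hqt' : (cfQ x n : ℝ) * gaussMap^[n + 1] x ≤ cfQ x (n + 1) :=
      (mul_le_of_le_one_right hq (ht (n + 1)).2.le).trans hqq
    constructor <;> nlinarith

lemma abs_log_le_log_two {y : ℝ} (hy : y ∈ Icc (1 / 2) 1) : |Real.log y| ≤ Real.log 2 := by
  have hy0 : 0 < y := by linarith [hy.1]
  rw [abs_of_nonpos (Real.log_nonpos hy0.le hy.2), neg_le, ← Real.log_inv]
  exact Real.log_le_log (by norm_num) (by linarith [hy.1])

theorem log_qn_birkhoff_general (x : ℝ) (hx : x ∈ Set.Ico (0:ℝ) 1) (hirr : Irrational x)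
    (n : ℕ) :
    |Real.log (cfQ x n) + ∑ i ∈ Finset.range n, Real.log (gaussMap^[i] x)| ≤ Real.log 2 := by
  have hx' : x ∈ Ioo 0 1 := ⟨hx.1.lt_of_ne' hirr.ne_zero, hx.2⟩
  have ht i : gaussMap^[i] x ≠ 0 := (iterate_gaussMap_mem_Ioo hx' hirr i).1.ne'
  have hq : (cfQ x n : ℝ) ≠ 0 := by
    have := one_le_cfQ (one_le_cfA_succ_of_irrational hx' hirr) n
    norm_cast
    omega
  rw [← Real.log_prod fun i _ => ht i,
    ← Real.log_mul hq (Finset.prod_ne_zero_iff.2 fun i _ => ht i)]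
  exact abs_log_le_log_two (cfQ_mul_prod_iterate_gaussMap_mem_Icc hx' hirr n)

theorem log_qn_birkhoff (x : ℝ) (hx : x ∈ Set.Ico (0:ℝ) 1) (hirr : Irrational x)
    (n : ℕ) (hn : 1 ≤ n) :
    |Real.log (cfQ x n) + ∑ i ∈ Finset.range n, Real.log (gaussMap^[i] x)| ≤ Real.log 2 :=
  log_qn_birkhoff_general x hx hirr n
end

section
/- Let β > 1. Then for Lebesgue-almost all x ∈ [0,1), lim_{n→∞} l_n(x)/√n = 0, where l_n(x) is the length of the longest string of zeros just after the n-th digit of the β-expansion of x. -/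
open MeasureTheory Filter Set

/-!
Parry's density `h x = ∑ₙ β⁻ⁿ 𝟙[x < T_βⁿ 1]` lies between `1` and `(1 - β⁻¹)⁻¹` on `[0, 1)` and is
fixed by the transfer operator of `T_β`; the fixed-point identity is the β-expansion
`1 = ∑ₙ εₙ(1) β⁻ⁿ` in disguise. So `h · Lebesgue` is `T_β`-invariant, and the Lebesgue measure of
`{x : T_βⁿ x < t}` is at most `t / (1 - β⁻¹)` uniformly in `n`. Now `l_n(x) ≥ k` forces
`T_βⁿ x < β⁻ᵏ`, and for `k = ⌈√n / m⌉` these measures are summable in `n`; by Borel–Cantelli,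
almost every `x` has `l_n(x) < √n / m + 1` for all large `n`, for every `m`.
-/

open scoped ENNReal Topology

namespace BetaExpansion

lemma betaT_mem_Ico (β x : ℝ) : betaT β x ∈ Ico (0 : ℝ) 1 :=
  ⟨Int.fract_nonneg _, Int.fract_lt_one _⟩

lemma iterate_betaT_lt_one {β x : ℝ} (hx : x < 1) : ∀ n, (betaT β)^[n] x < 1
  | 0 => hx
  | n + 1 => by rw [Function.iterate_succ_apply']; exact (betaT_mem_Ico β _).2

lemma iterate_betaT_mem_Icc {β x : ℝ} (hx : x ∈ Icc (0 : ℝ) 1) :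
    ∀ n, (betaT β)^[n] x ∈ Icc (0 : ℝ) 1
  | 0 => hx
  | n + 1 => by rw [Function.iterate_succ_apply']; exact Ico_subset_Icc_self (betaT_mem_Ico β _)

lemma measurable_betaT (β : ℝ) : Measurable (betaT β) := by
  unfold betaT; measurability

lemma betaEps_succ (β x : ℝ) (n : ℕ) : betaEps β (n + 1) x = ⌊β * (betaT β)^[n] x⌋ := rfl

lemma sum_range_betaEps {β : ℝ} (hβ : β ≠ 0) (x : ℝ) (N : ℕ) :
    ∑ n ∈ Finset.range N, (betaEps β (n + 1) x : ℝ) * β⁻¹ ^ (n + 1)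
      = x - β⁻¹ ^ N * (betaT β)^[N] x := by
  induction N with
  | zero => simp
  | succ N ih =>
    rw [Finset.sum_range_succ, ih, Function.iterate_succ_apply', betaEps_succ, betaT, pow_succ]
    field_simp
    ring

lemma hasSum_betaEps {β : ℝ} (hβ : 1 < β) {x : ℝ} (hx : x ∈ Icc (0 : ℝ) 1) :
    HasSum (fun n => (betaEps β (n + 1) x : ℝ) * β⁻¹ ^ (n + 1)) x := by
  have hβ0 : 0 < β := by linarith
  have hr0 : 0 < β⁻¹ := inv_pos.2 hβ0
  have hr : β⁻¹ < 1 := inv_lt_one_of_one_lt₀ hβ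
  have hdigit : ∀ n, 0 ≤ (betaEps β (n + 1) x : ℝ) := fun n => by
    exact_mod_cast Int.floor_nonneg.2 (mul_nonneg hβ0.le (iterate_betaT_mem_Icc hx n).1)
  rw [hasSum_iff_tendsto_nat_of_nonneg (fun n => mul_nonneg (hdigit n) (by positivity))]
  simp only [sum_range_betaEps hβ0.ne']
  have hrem : Tendsto (fun N => β⁻¹ ^ N * (betaT β)^[N] x) atTop (𝓝 0) :=
    squeeze_zero (fun N => mul_nonneg (by positivity) (iterate_betaT_mem_Icc hx N).1)
      (fun N => mul_le_of_le_one_right (by positivity) (iterate_betaT_mem_Icc hx N).2)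
      (tendsto_pow_atTop_nhds_zero_of_lt_one (by positivity) hr)
  simpa using tendsto_const_nhds.sub hrem

lemma natCast_floor_mul_iterate_betaT {β x : ℝ} (hβ : 0 ≤ β) (hx : x ∈ Icc (0 : ℝ) 1) (n : ℕ) :
    ((⌊β * (betaT β)^[n] x⌋₊ : ℕ) : ℝ) = betaEps β (n + 1) x := by
  rw [betaEps_succ, ← Int.natCast_floor_eq_floor (mul_nonneg hβ (iterate_betaT_mem_Icc hx n).1),
    Int.cast_natCast]

lemma tsum_floor_orbit_one {β : ℝ} (hβ : 1 < β) :
    ∑' n : ℕ, (⌊β * (betaT β)^[n] 1⌋₊ : ℝ≥0∞) * ENNReal.ofReal β⁻¹ ^ (n + 1) = 1 := by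
  have h1 : (1 : ℝ) ∈ Icc (0 : ℝ) 1 := ⟨zero_le_one, le_rfl⟩
  have hsum := hasSum_betaEps hβ h1
  have hnonneg : ∀ n, 0 ≤ (betaEps β (n + 1) 1 : ℝ) * β⁻¹ ^ (n + 1) := fun n => by
    rw [← natCast_floor_mul_iterate_betaT (by linarith) h1]; positivity
  have hterm : ∀ n : ℕ, (⌊β * (betaT β)^[n] 1⌋₊ : ℝ≥0∞) * ENNReal.ofReal β⁻¹ ^ (n + 1)
      = ENNReal.ofReal ((betaEps β (n + 1) 1 : ℝ) * β⁻¹ ^ (n + 1)) := fun n => by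
    rw [← natCast_floor_mul_iterate_betaT (by linarith) h1, ENNReal.ofReal_mul (by positivity),
      ENNReal.ofReal_natCast, ENNReal.ofReal_pow (inv_nonneg.2 (by linarith))]
  rw [tsum_congr hterm, ← ENNReal.ofReal_tsum_of_nonneg hnonneg hsum.summable, hsum.tsum_eq,
    ENNReal.ofReal_one]

/-- Parry's unnormalised invariant density of `T_β`. -/
noncomputable def parryDensity (β x : ℝ) : ℝ≥0∞ :=
  ∑' n : ℕ, (Ico 0 ((betaT β)^[n] 1)).indicator (fun _ => ENNReal.ofReal β⁻¹ ^ n) x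

lemma measurable_parryDensity (β : ℝ) : Measurable (parryDensity β) :=
  Measurable.tsum fun _ => measurable_const.indicator measurableSet_Ico

lemma parryDensity_eq_zero_of_notMem {β x : ℝ} (hx : x ∉ Ico (0 : ℝ) 1) :
    parryDensity β x = 0 :=
  ENNReal.tsum_eq_zero.2 fun n => indicator_of_notMem (fun h => hx
    ⟨h.1, h.2.trans_le (iterate_betaT_mem_Icc ⟨zero_le_one, le_rfl⟩ n).2⟩) _

lemma one_le_parryDensity {β x : ℝ} (hx : x ∈ Ico (0 : ℝ) 1) : 1 ≤ parryDensity β x :=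
  calc (1 : ℝ≥0∞) = (Ico 0 ((betaT β)^[0] 1)).indicator (fun _ => ENNReal.ofReal β⁻¹ ^ 0) x := by
        simp [hx]
    _ ≤ parryDensity β x := ENNReal.le_tsum 0

lemma parryDensity_le (β x : ℝ) : parryDensity β x ≤ (1 - ENNReal.ofReal β⁻¹)⁻¹ := by
  rw [← ENNReal.tsum_geometric]
  exact ENNReal.tsum_le_tsum fun n => indicator_le_self _ _ x

lemma tsum_ite_natCast_lt (c : ℝ) (a : ℝ≥0∞) :
    ∑' k : ℕ, (if (k : ℝ) < c then a else 0) = ⌈c⌉₊ * a := by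
  have hceil : ∀ k : ℕ, (k : ℝ) < c ↔ k < ⌈c⌉₊ := fun k => Nat.lt_ceil.symm
  simp only [hceil]
  rw [tsum_eq_sum (s := Finset.range ⌈c⌉₊) fun k hk => if_neg (by simpa using hk),
    Finset.sum_ite_of_true fun k hk => Finset.mem_range.1 hk, Finset.sum_const, Finset.card_range,
    nsmul_eq_mul]

lemma ceil_sub_eq_floor_add_ite {z y : ℝ} (hz : 0 ≤ z) (hy : y ∈ Ico (0 : ℝ) 1) :
    ⌈z - y⌉₊ = ⌊z⌋₊ + if y < Int.fract z then 1 else 0 := by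
  have hfract : Int.fract z = z - ⌊z⌋₊ := by
    rw [Int.fract, ← Int.natCast_floor_eq_floor hz, Int.cast_natCast]
  have h0 := Int.fract_nonneg z
  have h1 := Int.fract_lt_one z
  obtain ⟨hy0, hy1⟩ := hy
  split_ifs with h
  · rw [Nat.ceil_eq_iff (by omega)]
    push_cast
    constructor <;> linarith
  · push Not at h
    rw [add_zero]
    refine le_antisymm (Nat.ceil_le.2 (by linarith)) ?_
    by_contra! hlt
    have := Nat.le_ceil (z - y)
    have : (⌈z - y⌉₊ : ℝ) + 1 ≤ ⌊z⌋₊ := by exact_mod_cast hlt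
    linarith

/-- Parry's density is fixed by the transfer operator `P g y = ∑ₖ β⁻¹ g ((y + k) / β)`
of `T_β`. -/
lemma tsum_parryDensity_branches {β y : ℝ} (hβ : 1 < β) (hy : y ∈ Ico (0 : ℝ) 1) :
    ∑' k : ℕ, ENNReal.ofReal β⁻¹ * parryDensity β ((y + k) / β) = parryDensity β y := by
  have hβ0 : 0 < β := by linarith
  set r := ENNReal.ofReal β⁻¹
  set u : ℕ → ℝ := fun n => (betaT β)^[n] 1 with hu
  have hu01 : ∀ n, u n ∈ Icc (0 : ℝ) 1 := iterate_betaT_mem_Icc ⟨zero_le_one, le_rfl⟩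
  have hdigits : ∑' n, (⌊β * u n⌋₊ : ℝ≥0∞) * r ^ (n + 1) = 1 := tsum_floor_orbit_one hβ
  have hbranch : ∀ n, ∑' k : ℕ, r * (Ico 0 (u n)).indicator (fun _ => r ^ n) ((y + k) / β)
      = (⌊β * u n⌋₊ + if y < u (n + 1) then 1 else 0) * r ^ (n + 1) := fun n => by
    have hmem : ∀ k : ℕ, (y + k) / β ∈ Ico 0 (u n) ↔ (k : ℝ) < β * u n - y := fun k => by
      rw [mem_Ico, div_lt_iff₀ hβ0]
      constructor
      · rintro ⟨-, h⟩; linarith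
      · intro h
        exact ⟨div_nonneg (by linarith [hy.1, k.cast_nonneg (α := ℝ)]) hβ0.le, by linarith⟩
    simp only [indicator, hmem, mul_ite, mul_zero, ← pow_succ']
    rw [tsum_ite_natCast_lt, ceil_sub_eq_floor_add_ite (mul_nonneg hβ0.le (hu01 n).1) hy]
    simp only [hu, Function.iterate_succ_apply']
    push_cast
    rfl
  calc ∑' k : ℕ, r * parryDensity β ((y + k) / β)
      = ∑' n, (⌊β * u n⌋₊ + if y < u (n + 1) then 1 else 0) * r ^ (n + 1) := by
        simp only [parryDensity, ← ENNReal.tsum_mul_left]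
        rw [ENNReal.tsum_comm]
        exact tsum_congr hbranch
    _ = 1 + ∑' n, (Ico 0 (u (n + 1))).indicator (fun _ => r ^ (n + 1)) y := by
        simp only [add_mul, ENNReal.tsum_add]
        rw [hdigits]
        congr 1
        exact tsum_congr fun n => by simp [indicator, hy.1]
    _ = parryDensity β y := by
        rw [parryDensity, tsum_eq_zero_add' ENNReal.summable (f := fun n =>
          (Ico 0 ((betaT β)^[n] 1)).indicator (fun _ => ENNReal.ofReal β⁻¹ ^ n) y)]
        congr 1
        simp [hy.1, hy.2]

lemma lintegral_comp_mul_sub {g : ℝ → ℝ≥0∞} (hg : Measurable g) {a : ℝ} (ha : 0 < a) (b : ℝ) :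
    ∫⁻ x, g (a * x - b) = ENNReal.ofReal a⁻¹ * ∫⁻ y, g y := by
  have hmap : Measure.map (fun x => a * x - b) volume = ENNReal.ofReal a⁻¹ • volume := by
    have hcomp : (fun x : ℝ => a * x - b) = (fun y => y + -b) ∘ fun x => a * x := by
      ext x; simp [sub_eq_add_neg]
    rw [hcomp, ← Measure.map_map (measurable_add_const _) (measurable_const_mul a),
      Real.map_volume_mul_left ha.ne', Measure.map_smul, map_add_right_eq_self,
      abs_of_pos (inv_pos.2 ha)]
  rw [← lintegral_map hg (by fun_prop), hmap, lintegral_smul_measure, smul_eq_mul]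

lemma tsum_indicator_Ico_sub_natCast {β x : ℝ} (hx : 0 ≤ β * x) (f : ℝ → ℝ≥0∞) :
    ∑' k : ℕ, (Ico 0 1).indicator f (β * x - k) = f (betaT β x) := by
  rw [tsum_eq_single ⌊β * x⌋₊]
  · have hT : β * x - ⌊β * x⌋₊ = betaT β x := by
      rw [betaT, ← Int.natCast_floor_eq_floor hx, Int.cast_natCast]
    rw [hT, indicator_of_mem (betaT_mem_Ico β x)]
  · intro k hk
    refine indicator_of_notMem (fun hmem => hk ?_) _
    rw [eq_comm, Nat.floor_eq_iff hx]
    constructor <;> linarith [hmem.1, hmem.2]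

lemma lintegral_comp_betaT_mul_parryDensity {β : ℝ} (hβ : 1 < β) {f : ℝ → ℝ≥0∞}
    (hf : Measurable f) :
    ∫⁻ x, f (betaT β x) * parryDensity β x = ∫⁻ x, f x * parryDensity β x := by
  have hβ0 : 0 < β := by linarith
  have hh := measurable_parryDensity β
  -- `g k` is the branch `{x | ⌊β x⌋ = k}` of the integrand, in the variable `y = β x - k`.
  let g : ℕ → ℝ → ℝ≥0∞ := fun k =>
    (Ico 0 1).indicator fun y => f y * parryDensity β ((y + k) / β)
  have hg : ∀ k, Measurable (g k) := fun k =>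
    (hf.mul (hh.comp (by fun_prop))).indicator measurableSet_Ico
  have hsplit : ∀ x, f (betaT β x) * parryDensity β x = ∑' k : ℕ, g k (β * x - k) := by
    intro x
    have hgk : ∀ k : ℕ,
        g k (β * x - k) = (Ico 0 1).indicator f (β * x - k) * parryDensity β x := by
      intro k
      have hx : (β * x - k + k) / β = x := by field_simp; ring
      simp only [g, indicator, hx, ite_mul, zero_mul]
    simp only [hgk, ENNReal.tsum_mul_right]
    by_cases hx : x ∈ Ico (0 : ℝ) 1
    · rw [tsum_indicator_Ico_sub_natCast (mul_nonneg hβ0.le hx.1)]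
    · simp [parryDensity_eq_zero_of_notMem hx]
  have hglue : ∀ y, ∑' k : ℕ, ENNReal.ofReal β⁻¹ * g k y = f y * parryDensity β y := by
    intro y
    by_cases hy : y ∈ Ico (0 : ℝ) 1
    · simp only [g, indicator_of_mem hy, mul_left_comm _ (f y), ENNReal.tsum_mul_left,
        tsum_parryDensity_branches hβ hy]
    · simp [g, hy, parryDensity_eq_zero_of_notMem hy]
  calc ∫⁻ x, f (betaT β x) * parryDensity β x
      = ∑' k : ℕ, ∫⁻ x, g k (β * x - k) := by
        simp_rw [hsplit]
        exact lintegral_tsum fun k => ((hg k).comp (by fun_prop)).aemeasurable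
    _ = ∑' k : ℕ, ∫⁻ y, ENNReal.ofReal β⁻¹ * g k y := by
        congr 1; ext k
        rw [lintegral_comp_mul_sub (hg k) hβ0, lintegral_const_mul _ (hg k)]
    _ = ∫⁻ y, f y * parryDensity β y := by
        rw [← lintegral_tsum fun k => ((hg k).const_mul _).aemeasurable]
        exact lintegral_congr hglue

noncomputable def parryMeasure (β : ℝ) : Measure ℝ := volume.withDensity (parryDensity β)

lemma measurePreserving_betaT {β : ℝ} (hβ : 1 < β) :
    MeasurePreserving (betaT β) (parryMeasure β) (parryMeasure β) := by
  refine ⟨measurable_betaT β, Measure.ext_of_lintegral _ fun f hf => ?_⟩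
  have hh := measurable_parryDensity β
  rw [lintegral_map hf (measurable_betaT β), parryMeasure,
    lintegral_withDensity_eq_lintegral_mul _ hh (g := fun x => f (betaT β x))
      (hf.comp (measurable_betaT β)),
    lintegral_withDensity_eq_lintegral_mul _ hh hf]
  simp only [Pi.mul_apply, mul_comm (parryDensity β _)]
  exact lintegral_comp_betaT_mul_parryDensity hβ hf

lemma volume_restrict_Ico_le_parryMeasure (β : ℝ) :
    volume.restrict (Ico (0 : ℝ) 1) ≤ parryMeasure β := by
  rw [← withDensity_indicator_one measurableSet_Ico, parryMeasure]
  exact withDensity_mono (ae_of_all _ (indicator_le fun x hx => one_le_parryDensity hx))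

lemma parryMeasure_le (β : ℝ) :
    parryMeasure β ≤ (1 - ENNReal.ofReal β⁻¹)⁻¹ • volume.restrict (Ico (0 : ℝ) 1) := by
  rw [← withDensity_const, ← withDensity_indicator measurableSet_Ico, parryMeasure]
  refine withDensity_mono (ae_of_all _ fun x => ?_)
  by_cases hx : x ∈ Ico (0 : ℝ) 1
  · rw [indicator_of_mem hx]; exact parryDensity_le β x
  · simp [parryDensity_eq_zero_of_notMem hx]

lemma volume_restrict_preimage_iterate_betaT_le {β : ℝ} (hβ : 1 < β) {s : Set ℝ}
    (hs : MeasurableSet s) (n : ℕ) :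
    volume.restrict (Ico (0 : ℝ) 1) ((betaT β)^[n] ⁻¹' s)
      ≤ (1 - ENNReal.ofReal β⁻¹)⁻¹ * volume.restrict (Ico (0 : ℝ) 1) s :=
  calc volume.restrict (Ico (0 : ℝ) 1) ((betaT β)^[n] ⁻¹' s)
      ≤ parryMeasure β ((betaT β)^[n] ⁻¹' s) := volume_restrict_Ico_le_parryMeasure β _
    _ = parryMeasure β s :=
        ((measurePreserving_betaT hβ).iterate n).measure_preimage hs.nullMeasurableSet
    _ ≤ _ := parryMeasure_le β s

lemma betaEps_add (β : ℝ) (n : ℕ) {j : ℕ} (hj : 1 ≤ j) (x : ℝ) :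
    betaEps β (n + j) x = betaEps β j ((betaT β)^[n] x) := by
  obtain ⟨i, rfl⟩ := Nat.exists_eq_add_of_le' hj
  rw [← add_assoc, betaEps_succ, betaEps_succ, ← Function.iterate_add_apply, add_comm i]

lemma betaEps_add_eq_zero_of_le_lZero {β x : ℝ} {n k j : ℕ} (hk : k ≤ lZero β n x)
    (hj : 1 ≤ j) (hjk : j ≤ k) : betaEps β (n + j) x = 0 := by
  set S := {k : ℕ | ∀ j, 1 ≤ j → j ≤ k → betaEps β (n + j) x = 0}
  obtain ⟨k', hk'S, hkk'⟩ : ∃ k' ∈ S, k ≤ k' := by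
    by_cases hS : BddAbove S
    · exact ⟨sSup S, Nat.sSup_mem ⟨0, fun j hj1 hj0 => by omega⟩ hS, hk⟩
    · obtain ⟨k', hk'S, hlt⟩ := not_bddAbove_iff.1 hS k
      exact ⟨k', hk'S, hlt.le⟩
  exact hk'S j hj (hjk.trans hkk')

lemma lt_inv_pow_of_betaEps_eq_zero {β : ℝ} (hβ : 0 < β) :
    ∀ {k : ℕ} {y : ℝ}, y < 1 → (∀ j, 1 ≤ j → j ≤ k → betaEps β j y = 0) → y < β⁻¹ ^ k
  | 0, y, hy, _ => by simpa using hy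
  | k + 1, y, _, h => by
    have hTy : betaT β y = β * y := by
      rw [betaT, show ⌊β * y⌋ = 0 from h 1 le_rfl (by omega), Int.cast_zero, sub_zero]
    have hshift := lt_inv_pow_of_betaEps_eq_zero hβ (k := k) (betaT_mem_Ico β y).2
      fun j hj hjk => by
        rw [← Function.iterate_one (betaT β), ← betaEps_add β 1 hj]
        exact h (1 + j) (by omega) (by omega)
    rw [hTy] at hshift
    rwa [pow_succ', lt_inv_mul_iff₀ hβ]

lemma iterate_betaT_lt_inv_pow_of_le_lZero {β x : ℝ} (hβ : 0 < β) (hx : x < 1) {n k : ℕ}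
    (hk : k ≤ lZero β n x) : (betaT β)^[n] x < β⁻¹ ^ k :=
  lt_inv_pow_of_betaEps_eq_zero hβ (iterate_betaT_lt_one hx n) fun j hj hjk => by
    rw [← betaEps_add β n hj]
    exact betaEps_add_eq_zero_of_le_lZero hk hj hjk

lemma summable_pow_ceil_sqrt_div {r c : ℝ} (hr0 : 0 < r) (hr1 : r < 1) (hc : 0 < c) :
    Summable fun n : ℕ => r ^ ⌈√n / c⌉₊ := by
  set a := -Real.log r / c
  have ha : 0 < a := div_pos (neg_pos.2 (Real.log_neg hr0 hr1)) hc
  -- `r ^ (√m / c) = exp (-a √m)`, and `exp t ≥ t ^ 4 / 4!` makes this `O(1 / m ^ 2)`.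
  have hbound : ∀ m : ℕ, 0 < m → r ^ ⌈√m / c⌉₊ ≤ 24 / a ^ 4 * (1 / (m : ℝ) ^ 2) := by
    intro m hm
    have hm' : (0 : ℝ) < m := by exact_mod_cast hm
    have hexp : r ^ (√m / c) = (Real.exp (a * √m))⁻¹ := by
      rw [Real.rpow_def_of_pos hr0, ← Real.exp_neg]
      congr 1
      simp only [a]
      field_simp
    have hpow : (a * √m) ^ 4 = a ^ 4 * (m : ℝ) ^ 2 := by
      rw [mul_pow, show √(m : ℝ) ^ 4 = (√(m : ℝ) ^ 2) ^ 2 by ring, Real.sq_sqrt hm'.le]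
    have hfact := Real.pow_div_factorial_le_exp (a * √m) (by positivity) 4
    rw [hpow, show ((Nat.factorial 4 : ℕ) : ℝ) = 24 by norm_num] at hfact
    calc r ^ ⌈√m / c⌉₊ = r ^ (⌈√m / c⌉₊ : ℝ) := (Real.rpow_natCast _ _).symm
      _ ≤ r ^ (√m / c) := Real.rpow_le_rpow_of_exponent_ge hr0 hr1.le (Nat.le_ceil _)
      _ = (Real.exp (a * √m))⁻¹ := hexp
      _ ≤ (a ^ 4 * (m : ℝ) ^ 2 / 24)⁻¹ := inv_anti₀ (by positivity) hfact
      _ = 24 / a ^ 4 * (1 / (m : ℝ) ^ 2) := by field_simp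
  refine (summable_nat_add_iff 1).1 (Summable.of_nonneg_of_le (fun n => by positivity)
    (fun n => hbound (n + 1) n.succ_pos) ?_)
  exact ((summable_nat_add_iff 1).2 (Real.summable_one_div_nat_pow.2 one_lt_two)).mul_left _

lemma tsum_volume_restrict_iterate_betaT_lt_ne_top {β : ℝ} (hβ : 1 < β) {c : ℝ} (hc : 0 < c) :
    ∑' n : ℕ, volume.restrict (Ico (0 : ℝ) 1) {x | (betaT β)^[n] x < β⁻¹ ^ ⌈√n / c⌉₊} ≠ ∞ := by
  have hr0 : 0 < β⁻¹ := inv_pos.2 (by linarith)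
  have hr1 : β⁻¹ < 1 := inv_lt_one_of_one_lt₀ hβ
  have hC : (1 - ENNReal.ofReal β⁻¹)⁻¹ ≠ ∞ :=
    ENNReal.inv_ne_top.2 (tsub_pos_of_lt (ENNReal.ofReal_lt_one.2 hr1)).ne'
  have hIio : ∀ t : ℝ, volume.restrict (Ico (0 : ℝ) 1) (Iio t) ≤ ENNReal.ofReal t := fun t => by
    rw [Measure.restrict_apply measurableSet_Iio]
    calc volume (Iio t ∩ Ico 0 1) ≤ volume (Ico 0 t) := measure_mono fun y hy => ⟨hy.2.1, hy.1⟩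
      _ = ENNReal.ofReal t := by rw [Real.volume_Ico, sub_zero]
  refine ne_top_of_le_ne_top ?_ (ENNReal.tsum_le_tsum fun n =>
    (volume_restrict_preimage_iterate_betaT_le hβ measurableSet_Iio n).trans
      (mul_le_mul_right (hIio _) _))
  rw [ENNReal.tsum_mul_left, ← ENNReal.ofReal_tsum_of_nonneg (fun n => by positivity)
    (summable_pow_ceil_sqrt_div hr0 hr1 hc)]
  exact ENNReal.mul_ne_top hC ENNReal.ofReal_ne_top

lemma tendsto_div_sqrt_of_eventually_lt {a : ℕ → ℝ} (ha : ∀ n, 0 ≤ a n)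
    (h : ∀ m : ℕ, ∀ᶠ n in atTop, a n < √n / (m + 1) + 1) :
    Tendsto (fun n => a n / √n) atTop (𝓝 0) := by
  refine tendsto_order.2 ⟨fun b hb => Eventually.of_forall fun n =>
    hb.trans_le (div_nonneg (ha n) (Real.sqrt_nonneg _)), fun ε hε => ?_⟩
  obtain ⟨m, hm⟩ := exists_nat_one_div_lt (half_pos hε)
  have hsqrt : Tendsto (fun n : ℕ => (√n)⁻¹) atTop (𝓝 0) :=
    tendsto_inv_atTop_zero.comp (Real.tendsto_sqrt_atTop.comp tendsto_natCast_atTop_atTop)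
  filter_upwards [h m, hsqrt.eventually (gt_mem_nhds (half_pos hε)), eventually_gt_atTop 0]
    with n hn hsq hn0
  have hpos : 0 < √n := Real.sqrt_pos.2 (by exact_mod_cast hn0)
  calc a n / √n < (√n / (m + 1) + 1) / √n := div_lt_div_of_pos_right hn hpos
    _ = 1 / (m + 1) + (√n)⁻¹ := by field_simp
    _ < ε / 2 + ε / 2 := add_lt_add hm hsq
    _ = ε := add_halves ε

end BetaExpansion

open BetaExpansion in
theorem ln_over_sqrt_to_zero (β : ℝ) (hβ : 1 < β) :
    ∀ᵐ x ∂(volume.restrict (Set.Ico (0:ℝ) 1)),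
      Tendsto (fun n : ℕ => (lZero β n x : ℝ) / Real.sqrt n) atTop (nhds 0) := by
  have hfar : ∀ m : ℕ, ∀ᵐ x ∂(volume.restrict (Ico (0 : ℝ) 1)),
      ∀ᶠ n in atTop, x ∉ {x | (betaT β)^[n] x < β⁻¹ ^ ⌈√n / (m + 1)⌉₊} := fun m =>
    ae_eventually_notMem (tsum_volume_restrict_iterate_betaT_lt_ne_top hβ m.cast_add_one_pos)
  filter_upwards [ae_restrict_mem measurableSet_Ico, ae_all_iff.2 hfar] with x hx hxfar
  refine tendsto_div_sqrt_of_eventually_lt (fun n => Nat.cast_nonneg _) fun m => ?_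
  filter_upwards [hxfar m] with n hn
  have hlt : lZero β n x < ⌈√n / (m + 1)⌉₊ := lt_of_not_ge fun hle =>
    hn (iterate_betaT_lt_inv_pow_of_le_lZero (by linarith) hx.2 hle)
  calc (lZero β n x : ℝ) < ⌈√n / (m + 1)⌉₊ := by exact_mod_cast hlt
    _ < √n / (m + 1) + 1 := Nat.ceil_lt_add_one (by positivity)
end

section
/- Let β > 1 and fix ε > 0. Then for every n ≥ 1, the Lebesgue measure of the set {x ∈ [0,1) : l_n(x) ≥ ε√n} is at most (β²/(β−1))·β^{−ε√n}; consequently Σ_{n=1}^{∞} P{x ∈ [0,1) : l_n(x) ≥ ε√n} < ∞. -/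
open MeasureTheory Filter Set

noncomputable def tauB (β c : ℝ) : ℝ := β * c - ⌈β * c⌉ + 1
noncomputable def orbB (β : ℝ) : ℕ → ℝ → ℝ
  | 0, c => c
  | n+1, c => orbB β n (tauB β c)
noncomputable def SB (β : ℝ) : ℕ → ℝ → ℝ
  | 0, _ => 0
  | n+1, c => ((⌈β * c⌉ : ℝ) - 1) + SB β n (tauB β c)
noncomputable def En (β : ℝ) (n : ℕ) (c t : ℝ) : ℝ :=
  t * ((β ^ (n+1) * c - β * orbB β n c - SB β n c) / (β - 1) + 1) / β ^ n

lemma key_alg (β t c R1 S1 Rt St m τ : ℝ) (n : ℕ) (hβ : 1 < β) (ht : 0 ≤ t) (hm : 1 ≤ m)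
    (hτ : τ = β * c - m + 1) (hK : β ≤ S1 + β * R1) :
    (m - 1) * (β⁻¹ * (t * ((β ^ (n+1) * 1 - β * R1 - S1) / (β - 1) + 1) / β ^ n))
      + β⁻¹ * (t * ((β ^ (n+1) * τ - β * Rt - St) / (β - 1) + 1) / β ^ n)
    ≤ t * ((β ^ (n+1+1) * c - β * Rt - ((m - 1) + St)) / (β - 1) + 1) / β ^ (n+1) := by
  have hb0 : (0:ℝ) < β := lt_trans one_pos hβ
  have hbn : (0:ℝ) < β ^ n := pow_pos hb0 n
  have hb1 : (0:ℝ) < β - 1 := by linarith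
  have hD : (0:ℝ) < β ^ n * β * (β - 1) := by positivity
  have e1 : (m - 1) * (β⁻¹ * (t * ((β ^ (n+1) * 1 - β * R1 - S1) / (β - 1) + 1) / β ^ n))
      + β⁻¹ * (t * ((β ^ (n+1) * τ - β * Rt - St) / (β - 1) + 1) / β ^ n)
      = t * ((m - 1) * ((β ^ n * β * 1 - β * R1 - S1) + (β - 1))
          + ((β ^ n * β * τ - β * Rt - St) + (β - 1))) / (β ^ n * β * (β - 1)) := by
    rw [pow_succ]
    field_simp
  have e2 : t * ((β ^ (n+1+1) * c - β * Rt - ((m - 1) + St)) / (β - 1) + 1) / β ^ (n+1)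
      = t * ((β ^ n * β * (β * c) - β * Rt - ((m - 1) + St)) + (β - 1)) / (β ^ n * β * (β - 1)) := by
    rw [pow_succ, pow_succ]
    field_simp
  rw [e1, e2, div_le_div_iff₀ hD hD]
  have hP : ((m - 1) * ((β ^ n * β * 1 - β * R1 - S1) + (β - 1))
          + ((β ^ n * β * τ - β * Rt - St) + (β - 1)))
      ≤ ((β ^ n * β * (β * c) - β * Rt - ((m - 1) + St)) + (β - 1)) := by
    nlinarith [mul_nonneg (sub_nonneg.2 hm) (sub_nonneg.2 hK), hbn.le]
  nlinarith [mul_le_mul_of_nonneg_left hP ht, hD.le, mul_nonneg ht hD.le]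

lemma betaT_eq_fract (β x : ℝ) : betaT β x = Int.fract (β * x) := rfl

lemma measurable_betaT (β : ℝ) : Measurable (betaT β) := by
  have : betaT β = fun x => Int.fract (β * x) := rfl
  rw [this]; exact (measurable_const_mul β).fract

lemma betaT_mem_Ico (β x : ℝ) : betaT β x ∈ Ico (0:ℝ) 1 :=
  ⟨Int.fract_nonneg _, Int.fract_lt_one _⟩

lemma tauB_mem (β c : ℝ) : tauB β c ∈ Ioc (0:ℝ) 1 := by
  constructor
  · have := Int.ceil_lt_add_one (β * c)
    unfold tauB; push_cast at this ⊢; linarith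
  · have := Int.le_ceil (β * c)
    unfold tauB; push_cast at this ⊢; linarith

lemma orbB_mem (β : ℝ) : ∀ n, ∀ c ∈ Ioc (0:ℝ) 1, orbB β n c ∈ Ioc (0:ℝ) 1
  | 0, c, hc => hc
  | n+1, c, _ => orbB_mem β n _ (tauB_mem β c)

lemma KB (β : ℝ) (hβ : 1 < β) : ∀ n, ∀ c ∈ Ioc (0:ℝ) 1, β * c ≤ SB β n c + β * orbB β n c
  | 0, _, _ => by simp [SB, orbB]
  | n+1, c, _ => by
    have h1 := KB β hβ n (tauB β c) (tauB_mem β c)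
    have h2 := tauB_mem β c
    have h3 : tauB β c ≤ β * tauB β c := le_mul_of_one_le_left h2.1.le hβ.le
    have h4 : β * c = ((⌈β * c⌉ : ℝ) - 1) + tauB β c := by unfold tauB; ring
    show β * c ≤ ((⌈β * c⌉ : ℝ) - 1) + SB β n (tauB β c) + β * orbB β n (tauB β c)
    linarith

lemma LB (β : ℝ) (hβ : 1 < β) : ∀ n, ∀ c ∈ Ioc (0:ℝ) 1,
    SB β n c + β * orbB β n c ≤ β ^ (n+1) * c
  | 0, _, _ => by simp [SB, orbB]
  | n+1, c, hc => by
    have h1 := LB β hβ n (tauB β c) (tauB_mem β c)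
    have hne : (0:ℝ) < β * c := mul_pos (lt_trans one_pos hβ) hc.1
    have hceil : (1:ℝ) ≤ (⌈β * c⌉ : ℝ) := by exact_mod_cast Int.ceil_pos.mpr hne
    have hpow : (1:ℝ) ≤ β ^ (n+1) := one_le_pow₀ hβ.le
    have h4 : β * c = ((⌈β * c⌉ : ℝ) - 1) + tauB β c := by unfold tauB; ring
    show ((⌈β * c⌉ : ℝ) - 1) + SB β n (tauB β c) + β * orbB β n (tauB β c) ≤ β ^ (n+2) * c
    have key : β ^ (n+2) * c = β ^ (n+1) * (((⌈β * c⌉ : ℝ) - 1) + tauB β c) := by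
      rw [← h4]; ring
    nlinarith [mul_le_mul_of_nonneg_left (sub_nonneg.mpr hceil) (le_trans zero_le_one hpow)]

lemma En_nonneg (β : ℝ) (hβ : 1 < β) (n : ℕ) (c t : ℝ) (hc : c ∈ Ioc (0:ℝ) 1) (ht : 0 ≤ t) :
    0 ≤ En β n c t := by
  have h1 := LB β hβ n c hc
  have hb0 : (0:ℝ) < β := lt_trans one_pos hβ
  have hbn : (0:ℝ) < β ^ n := pow_pos hb0 n
  have hb1 : (0:ℝ) < β - 1 := by linarith
  have hnum : 0 ≤ β ^ (n+1) * c - β * orbB β n c - SB β n c := by linarith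
  unfold En
  positivity

lemma main_bound (β : ℝ) (hβ : 1 < β) :
    ∀ n : ℕ, ∀ c ∈ Ioc (0:ℝ) 1, ∀ t : ℝ, 0 ≤ t →
    volume {y ∈ Ico (0:ℝ) c | (betaT β)^[n] y < t} ≤ ENNReal.ofReal (En β n c t) := by
  have hb0 : (0:ℝ) < β := lt_trans one_pos hβ
  intro n
  induction n with
  | zero =>
    intro c _ t _
    have hsub : {y ∈ Ico (0:ℝ) c | (betaT β)^[0] y < t} ⊆ Ico (0:ℝ) t := by
      rintro y ⟨⟨hy0, _⟩, hyt⟩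
      exact ⟨hy0, by simpa using hyt⟩
    calc volume {y ∈ Ico (0:ℝ) c | (betaT β)^[0] y < t} ≤ volume (Ico (0:ℝ) t) :=
          measure_mono hsub
      _ = ENNReal.ofReal t := by simp
      _ = ENNReal.ofReal (En β 0 c t) := by
          congr 1
          simp [En, orbB, SB]
  | succ n ih =>
    intro c hc t ht
    have hβc : (0:ℝ) < β * c := mul_pos hb0 hc.1
    have hceil_pos : (0:ℤ) < ⌈β * c⌉ := Int.ceil_pos.mpr hβc
    set M : ℕ := (⌈β * c⌉).toNat with hMdef
    have hM : (M : ℝ) = (⌈β * c⌉ : ℝ) := by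
      rw [hMdef]; exact_mod_cast congrArg Int.cast (Int.toNat_of_nonneg hceil_pos.le)
    have hM1 : 1 ≤ M := by omega
    obtain ⟨M', hM'⟩ : ∃ M', M = M' + 1 := ⟨M - 1, by omega⟩
    have hMlt : (M : ℝ) - 1 < β * c := by
      have := Int.ceil_lt_add_one (β * c)
      rw [hM]; push_cast at this ⊢; linarith
    have hMle : β * c ≤ (M : ℝ) := by rw [hM]; exact Int.le_ceil _
    set B : ℕ → Set ℝ := fun i =>
      {z ∈ Ico (0:ℝ) (min (β * c - i) 1) | (betaT β)^[n] z < t} with hB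
    -- the covering
    have hsub : {y ∈ Ico (0:ℝ) c | (betaT β)^[n+1] y < t} ⊆
        ⋃ i ∈ Finset.range M, (fun y => β * y - (i:ℝ)) ⁻¹' B i := by
      rintro y ⟨⟨hy0, hyc⟩, hyT⟩
      have hβy : 0 ≤ β * y := mul_nonneg hb0.le hy0
      have hfl : (0:ℤ) ≤ ⌊β * y⌋ := Int.floor_nonneg.mpr hβy
      set i0 : ℕ := (⌊β * y⌋).toNat with hi0def
      have hi0 : (i0 : ℝ) = ((⌊β * y⌋ : ℤ) : ℝ) := by
        rw [hi0def]; exact_mod_cast congrArg Int.cast (Int.toNat_of_nonneg hfl)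
      have hylt : β * y < β * c := by
        exact mul_lt_mul_of_pos_left hyc hb0
      have hIlt : ⌊β * y⌋ < ⌈β * c⌉ := by
        have h1 : ((⌊β * y⌋ : ℤ) : ℝ) < ((⌈β * c⌉ : ℤ) : ℝ) :=
          lt_of_le_of_lt (Int.floor_le _) (lt_of_lt_of_le hylt (Int.le_ceil _))
        exact_mod_cast h1
      have hi0M : i0 < M := by omega
      refine Set.mem_iUnion₂.mpr ⟨i0, Finset.mem_range.mpr hi0M, ?_⟩
      have hz_eq : β * y - (i0 : ℝ) = betaT β y := by
        unfold betaT; rw [hi0]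
      simp only [mem_preimage]
      refine ⟨⟨?_, ?_⟩, ?_⟩
      · show (0:ℝ) ≤ β * y - (i0:ℝ)
        rw [hz_eq]; exact (betaT_mem_Ico β y).1
      · show β * y - (i0:ℝ) < min (β * c - (i0:ℝ)) 1
        refine lt_min (by linarith) ?_
        rw [hz_eq]; exact (betaT_mem_Ico β y).2
      · show (betaT β)^[n] (β * y - (i0:ℝ)) < t
        rw [hz_eq, ← Function.iterate_succ_apply]
        exact hyT
    -- bound each branch
    have hbranch : ∀ i ∈ Finset.range M,
        volume ((fun y => β * y - (i:ℝ)) ⁻¹' B i) ≤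
          ENNReal.ofReal (β⁻¹ * En β n (min (β * c - i) 1) t) := by
      intro i hi
      have hiM : i < M := Finset.mem_range.mp hi
      have hci : min (β * c - i) 1 ∈ Ioc (0:ℝ) 1 := by
        constructor
        · refine lt_min ?_ one_pos
          have : (i:ℝ) ≤ (M:ℝ) - 1 := by
            have : (i:ℝ) + 1 ≤ (M:ℝ) := by exact_mod_cast hiM
            linarith
          linarith
        · exact min_le_right _ _
      have hpre : (fun y => β * y - (i:ℝ)) ⁻¹' B i
          = (fun y => β * y) ⁻¹' ((fun z => z + (-(i:ℝ))) ⁻¹' B i) := by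
        ext y; simp [sub_eq_add_neg]
      rw [hpre, Real.volume_preimage_mul_left (ne_of_gt hb0),
        measure_preimage_add_right]
      have hvB := ih (min (β * c - i) 1) hci t ht
      calc ENNReal.ofReal |β⁻¹| * volume (B i)
          ≤ ENNReal.ofReal β⁻¹ * ENNReal.ofReal (En β n (min (β * c - i) 1) t) := by
            rw [abs_of_pos (by positivity)]
            exact mul_le_mul_right hvB _
        _ = ENNReal.ofReal (β⁻¹ * En β n (min (β * c - i) 1) t) := by
            rw [ENNReal.ofReal_mul (by positivity)]
    -- sum up
    have hEn1 : 0 ≤ En β n 1 t := En_nonneg β hβ n 1 t ⟨one_pos, le_refl 1⟩ ht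
    have hEnτ : 0 ≤ En β n (tauB β c) t := En_nonneg β hβ n _ t (tauB_mem β c) ht
    have hmin1 : ∀ i : ℕ, i < M' → min (β * c - i) 1 = 1 := by
      intro i hi
      refine min_eq_right ?_
      have h1 : (i:ℝ) + 1 ≤ (M':ℝ) := by exact_mod_cast hi
      have h2 : (M:ℝ) = (M':ℝ) + 1 := by exact_mod_cast hM'
      linarith
    have hminτ : min (β * c - M') 1 = tauB β c := by
      have h2 : (M:ℝ) = (M':ℝ) + 1 := by exact_mod_cast hM'
      have hτ : tauB β c = β * c - (M':ℝ) := by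
        unfold tauB; rw [← hM]; linarith
      rw [min_eq_left (by linarith), hτ]
    calc volume {y ∈ Ico (0:ℝ) c | (betaT β)^[n+1] y < t}
        ≤ volume (⋃ i ∈ Finset.range M, (fun y => β * y - (i:ℝ)) ⁻¹' B i) :=
          measure_mono hsub
      _ ≤ ∑ i ∈ Finset.range M, volume ((fun y => β * y - (i:ℝ)) ⁻¹' B i) :=
          measure_biUnion_finset_le _ _
      _ ≤ ∑ i ∈ Finset.range M, ENNReal.ofReal (β⁻¹ * En β n (min (β * c - i) 1) t) :=
          Finset.sum_le_sum hbranch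
      _ = ∑ i ∈ Finset.range M', ENNReal.ofReal (β⁻¹ * En β n (min (β * c - i) 1) t)
            + ENNReal.ofReal (β⁻¹ * En β n (min (β * c - M') 1) t) := by
          rw [hM', Finset.sum_range_succ]
      _ = (M' : ℕ) • ENNReal.ofReal (β⁻¹ * En β n 1 t)
            + ENNReal.ofReal (β⁻¹ * En β n (tauB β c) t) := by
          rw [hminτ]
          congr 1
          rw [Finset.sum_congr rfl fun i hi => by
            rw [hmin1 i (Finset.mem_range.mp hi)]]
          simp [Finset.sum_const]
      _ = ENNReal.ofReal ((M' : ℝ) * (β⁻¹ * En β n 1 t))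
            + ENNReal.ofReal (β⁻¹ * En β n (tauB β c) t) := by
          congr 1
          rw [nsmul_eq_mul, ENNReal.ofReal_mul (by positivity : (0:ℝ) ≤ (M':ℝ)),
            ENNReal.ofReal_natCast]
      _ ≤ ENNReal.ofReal (En β (n+1) c t) := by
          rw [← ENNReal.ofReal_add (by positivity) (by positivity)]
          apply ENNReal.ofReal_le_ofReal
          have hKh := KB β hβ n 1 ⟨one_pos, le_refl 1⟩
          rw [mul_one] at hKh
          have h2 : (M:ℝ) = (M':ℝ) + 1 := by exact_mod_cast hM'
          have halg := key_alg β t c (orbB β n 1) (SB β n 1) (orbB β n (tauB β c))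
            (SB β n (tauB β c)) (M:ℝ) (tauB β c) n hβ ht
            (by rw [hM]; exact_mod_cast hceil_pos)
            (by unfold tauB; rw [hM])
            hKh
          have hunf : En β (n+1) c t
              = t * ((β ^ (n+1+1) * c - β * orbB β n (tauB β c)
                  - (((M:ℝ) - 1) + SB β n (tauB β c))) / (β - 1) + 1) / β ^ (n+1) := by
            unfold En
            show t * ((β ^ (n+2) * c - β * orbB β n (tauB β c)
              - (((⌈β * c⌉:ℝ) - 1) + SB β n (tauB β c))) / (β - 1) + 1) / β ^ (n+1) = _
            rw [hM]
          rw [hunf]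
          have hEnτunf : En β n (tauB β c) t
              = t * ((β ^ (n+1) * tauB β c - β * orbB β n (tauB β c)
                  - SB β n (tauB β c)) / (β - 1) + 1) / β ^ n := rfl
          have hEn1unf : En β n 1 t
              = t * ((β ^ (n+1) * 1 - β * orbB β n 1 - SB β n 1) / (β - 1) + 1) / β ^ n := rfl
          calc (M':ℝ) * (β⁻¹ * En β n 1 t) + β⁻¹ * En β n (tauB β c) t
              = ((M:ℝ) - 1) * (β⁻¹ * (t * ((β ^ (n+1) * 1 - β * orbB β n 1 - SB β n 1)
                  / (β - 1) + 1) / β ^ n))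
                + β⁻¹ * (t * ((β ^ (n+1) * tauB β c - β * orbB β n (tauB β c)
                  - SB β n (tauB β c)) / (β - 1) + 1) / β ^ n) := by
                rw [← hEn1unf, ← hEnτunf, h2]; ring
            _ ≤ _ := halg

lemma digits_zero_lt (β : ℝ) (hβ : 1 < β) :
    ∀ k : ℕ, ∀ y : ℝ, 0 ≤ y → y < 1 →
      (∀ j, 1 ≤ j → j ≤ k → ⌊β * (betaT β)^[j-1] y⌋ = 0) → y < (β ^ k)⁻¹
  | 0, y, _, h1, _ => by simpa using h1
  | k+1, y, h0, _, hd => by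
    have hb0 : (0:ℝ) < β := lt_trans one_pos hβ
    have h01 : ⌊β * y⌋ = 0 := by simpa using hd 1 le_rfl (by omega)
    have hlt : β * y < 1 := by
      have h := Int.lt_floor_add_one (β * y)
      rw [h01] at h; simpa using h
    have hT : betaT β y = β * y := by unfold betaT; rw [h01]; simp
    have hrec : β * y < (β ^ k)⁻¹ := by
      refine digits_zero_lt β hβ k (β * y) (by positivity) hlt ?_
      intro j hj1 hjk
      obtain ⟨j', rfl⟩ : ∃ j', j = j' + 1 := ⟨j - 1, by omega⟩
      have h := hd (j' + 2) (by omega) (by omega)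
      have hidx : (betaT β)^[j' + 2 - 1] y = (betaT β)^[j' + 1 - 1] (β * y) := by
        rw [← hT]
        show (betaT β)^[j' + 1] y = (betaT β)^[j'] (betaT β y)
        rw [Function.iterate_succ_apply]
      rw [hidx] at h
      exact h
    have hpk : (0:ℝ) < β ^ k := pow_pos hb0 k
    have hinv : (β ^ k)⁻¹ * β ^ k = 1 := inv_mul_cancel₀ hpk.ne'
    have hpow : (0:ℝ) < β ^ (k+1) := pow_pos hb0 _
    rw [← one_div, lt_div_iff₀ hpow, pow_succ]
    nlinarith [mul_lt_mul_of_pos_right hrec hpk]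

theorem ln_large_deviation (β : ℝ) (hβ : 1 < β) (ε : ℝ) (hε : 0 < ε) :
    (∀ n : ℕ, 1 ≤ n →
      volume {x ∈ Set.Ico (0:ℝ) 1 | ε * Real.sqrt n ≤ (lZero β n x : ℝ)} ≤
        ENNReal.ofReal (β ^ 2 / (β - 1) * β ^ (-(ε * Real.sqrt n)))) ∧
    ∑' n : ℕ,
      volume {x ∈ Set.Ico (0:ℝ) 1 |
        ε * Real.sqrt (n + 1) ≤ (lZero β (n + 1) x : ℝ)} < ⊤ := by
  have hb0 : (0:ℝ) < β := lt_trans one_pos hβ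
  have hb1 : (0:ℝ) < β - 1 := by linarith
  have hpart1 : ∀ n : ℕ, 1 ≤ n →
      volume {x ∈ Set.Ico (0:ℝ) 1 | ε * Real.sqrt n ≤ (lZero β n x : ℝ)} ≤
        ENNReal.ofReal (β ^ 2 / (β - 1) * β ^ (-(ε * Real.sqrt n))) := by
    intro n hn
    have hn0 : (0:ℝ) < (n:ℝ) := by exact_mod_cast hn
    have hsq : 0 < Real.sqrt n := Real.sqrt_pos.2 hn0
    have hεs : 0 < ε * Real.sqrt n := mul_pos hε hsq
    set k := ⌈ε * Real.sqrt n⌉₊ with hkdef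
    have hsub : {x ∈ Set.Ico (0:ℝ) 1 | ε * Real.sqrt n ≤ (lZero β n x : ℝ)} ⊆
        {y ∈ Ico (0:ℝ) 1 | (betaT β)^[n] y < (β ^ k)⁻¹} := by
      rintro x ⟨hx, hl⟩
      refine ⟨hx, ?_⟩
      have hkl : k ≤ lZero β n x := Nat.ceil_le.2 hl
      have hmem : ∀ j, 1 ≤ j → j ≤ k → betaEps β (n + j) x = 0 := by
        by_contra h
        push_neg at h
        obtain ⟨j0, hj1, hjk, hne⟩ := h
        have hbdd : ∀ m ∈ {k | ∀ j, 1 ≤ j → j ≤ k → betaEps β (n + j) x = 0}, m ≤ j0 - 1 := by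
          intro m hm
          by_contra hmj
          push_neg at hmj
          exact hne (hm j0 hj1 (by omega))
        have hsup : lZero β n x ≤ j0 - 1 := by
          unfold lZero
          exact csSup_le ⟨0, fun j hj1 hj0 => absurd hj0 (by omega)⟩ hbdd
        omega
      have hy : ∀ j, 1 ≤ j → j ≤ k →
          ⌊β * (betaT β)^[j-1] ((betaT β)^[n] x)⌋ = 0 := by
        intro j hj1 hjk
        have h := hmem j hj1 hjk
        unfold betaEps at h
        rw [← Function.iterate_add_apply]
        have hidx : j - 1 + n = n + j - 1 := by omega
        rw [hidx]
        exact h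
      have hyI : (betaT β)^[n] x ∈ Ico (0:ℝ) 1 := by
        have hn' : n - 1 + 1 = n := by omega
        have : (betaT β)^[n] x = betaT β ((betaT β)^[n-1] x) := by
          conv_lhs => rw [← hn']
          rw [Function.iterate_succ_apply']
        rw [this]
        exact betaT_mem_Ico β _
      exact digits_zero_lt β hβ k _ hyI.1 hyI.2 hy
    have hbig : En β n 1 ((β ^ k)⁻¹) ≤ β ^ 2 / (β - 1) * β ^ (-(ε * Real.sqrt n)) := by
      set t : ℝ := (β ^ k)⁻¹ with htdef
      have ht0 : 0 ≤ t := by positivity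
      have hbn : (0:ℝ) < β ^ n := pow_pos hb0 n
      have hR := KB β hβ n 1 ⟨one_pos, le_rfl⟩
      rw [mul_one] at hR
      have e : En β n 1 t
          = t * ((β ^ (n+1) * 1 - β * orbB β n 1 - SB β n 1) / (β - 1) + 1) / β ^ n := rfl
      have hinner : (β ^ (n+1) * 1 - β * orbB β n 1 - SB β n 1) / (β - 1) + 1
          ≤ β ^ (n+1) / (β - 1) := by
        rw [div_add' _ _ _ hb1.ne']
        exact (div_le_div_iff_of_pos_right hb1).2 (by nlinarith)
      have key : En β n 1 t ≤ t * (β / (β - 1)) := by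
        rw [e]
        calc t * ((β ^ (n+1) * 1 - β * orbB β n 1 - SB β n 1) / (β - 1) + 1) / β ^ n
            ≤ t * (β ^ (n+1) / (β - 1)) / β ^ n := by gcongr
          _ = t * (β / (β - 1)) := by
              rw [pow_succ]
              field_simp
      have ht_le : t ≤ β ^ (-(ε * Real.sqrt n)) := by
        rw [htdef, ← Real.rpow_natCast β k, ← Real.rpow_neg hb0.le]
        exact (Real.rpow_le_rpow_left_iff hβ).2 (by
          have := Nat.le_ceil (ε * Real.sqrt n)
          rw [← hkdef] at this
          linarith)
      have hu0 : (0:ℝ) ≤ β ^ (-(ε * Real.sqrt n)) := Real.rpow_nonneg hb0.le _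
      calc En β n 1 t ≤ t * (β / (β - 1)) := key
        _ ≤ β ^ (-(ε * Real.sqrt n)) * (β / (β - 1)) :=
            mul_le_mul_of_nonneg_right ht_le (by positivity)
        _ ≤ β ^ (-(ε * Real.sqrt n)) * (β ^ 2 / (β - 1)) := by
            apply mul_le_mul_of_nonneg_left _ hu0
            exact (div_le_div_iff_of_pos_right hb1).2 (by nlinarith)
        _ = β ^ 2 / (β - 1) * β ^ (-(ε * Real.sqrt n)) := by ring
    calc volume {x ∈ Set.Ico (0:ℝ) 1 | ε * Real.sqrt n ≤ (lZero β n x : ℝ)}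
        ≤ volume {y ∈ Ico (0:ℝ) 1 | (betaT β)^[n] y < (β ^ k)⁻¹} := measure_mono hsub
      _ ≤ ENNReal.ofReal (En β n 1 ((β ^ k)⁻¹)) :=
          main_bound β hβ n 1 ⟨one_pos, le_rfl⟩ _ (by positivity)
      _ ≤ ENNReal.ofReal (β ^ 2 / (β - 1) * β ^ (-(ε * Real.sqrt n))) :=
          ENNReal.ofReal_le_ofReal hbig
  refine ⟨hpart1, ?_⟩
  set g : ℕ → ℝ := fun m => β ^ 2 / (β - 1) * β ^ (-(ε * Real.sqrt (m + 1))) with hg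
  have hterm : ∀ m : ℕ,
      volume {x ∈ Set.Ico (0:ℝ) 1 | ε * Real.sqrt (m + 1) ≤ (lZero β (m + 1) x : ℝ)}
      ≤ ENNReal.ofReal (g m) := by
    intro m
    have h := hpart1 (m + 1) (by omega)
    have hcast : ((m + 1 : ℕ) : ℝ) = (m : ℝ) + 1 := by push_cast; ring
    rw [hcast] at h
    exact h
  have hlog : 0 < Real.log β := Real.log_pos hβ
  have hgs : Summable g := by
    apply Summable.mul_left
    have hbase : Summable (fun m : ℕ => 1 / ((m:ℝ) + 1) ^ 2) := by
      have h2 := (summable_nat_add_iff 1).2 (Real.summable_one_div_nat_pow.2 (by norm_num : 1 < 2))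
      refine h2.congr fun m => ?_
      push_cast
      ring
    apply Summable.of_nonneg_of_le (fun m => Real.rpow_nonneg hb0.le _)
      (fun m => ?_) (hbase.mul_left (256 / (ε ^ 4 * Real.log β ^ 4)))
    set z : ℝ := ε * Real.sqrt ((m:ℝ) + 1) * Real.log β with hz
    have hm1 : (0:ℝ) < (m:ℝ) + 1 := by positivity
    have hsq : 0 < Real.sqrt ((m:ℝ) + 1) := Real.sqrt_pos.2 hm1
    have hz0 : 0 < z := by positivity
    have hexp : (z / 4) ^ 4 ≤ Real.exp z := by
      have h1 : z / 4 ≤ Real.exp (z / 4) := by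
        have := Real.add_one_le_exp (z / 4)
        linarith
      calc (z / 4) ^ 4 ≤ Real.exp (z / 4) ^ 4 :=
            pow_le_pow_left₀ (by positivity) h1 4
        _ = Real.exp z := by
            rw [← Real.exp_nat_mul]
            congr 1
            push_cast
            ring
    have hval : β ^ (-(ε * Real.sqrt ((m:ℝ) + 1))) = (Real.exp z)⁻¹ := by
      rw [Real.rpow_def_of_pos hb0, ← Real.exp_neg]
      congr 1
      rw [hz]; ring
    have hz4 : z ^ 4 = ε ^ 4 * Real.log β ^ 4 * ((m:ℝ) + 1) ^ 2 := by
      have hs : Real.sqrt ((m:ℝ) + 1) ^ 4 = ((m:ℝ) + 1) ^ 2 := by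
        have := Real.sq_sqrt hm1.le
        nlinarith [this]
      rw [hz, mul_pow, mul_pow, hs]
      ring
    have hzpos : (0:ℝ) < (z / 4) ^ 4 := by positivity
    rw [hval]
    have hle : (Real.exp z)⁻¹ ≤ ((z / 4) ^ 4)⁻¹ :=
      inv_anti₀ hzpos hexp
    refine le_trans hle ?_
    rw [div_pow]
    rw [inv_div]
    rw [hz4]
    have : (256:ℝ) / (ε ^ 4 * Real.log β ^ 4) * (1 / ((m:ℝ) + 1) ^ 2)
        = (4:ℝ)^4 / (ε ^ 4 * Real.log β ^ 4 * ((m:ℝ) + 1) ^ 2) := by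
      norm_num
      field_simp
    rw [this]
  calc ∑' n : ℕ, volume {x ∈ Set.Ico (0:ℝ) 1 |
        ε * Real.sqrt (n + 1) ≤ (lZero β (n + 1) x : ℝ)}
      ≤ ∑' n : ℕ, ENNReal.ofReal (g n) := ENNReal.tsum_le_tsum hterm
    _ < ⊤ := by
        rw [← ENNReal.ofReal_tsum_of_nonneg (fun m => by positivity) hgs]
        exact ENNReal.ofReal_lt_top
end
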